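/- arXiv:1601.07743 — 5 statements merged into one kernel-verified Lean document; each statement's English description precedes it below -/
import Mathlib

section
/- For every λ > 0, n ∈ ℕ₀ and x ∈ [−1,1], d/dx{(1+x) C_n^λ(x)} = (n+1) C_n^λ(x) + 2 Σ_{k=0}^{n−1} (k+λ) C_k^λ(x). -/
open Real MeasureTheory Finset intervalIntegral

noncomputable section

/-- The Gegenbauer (ultraspherical) polynomial `C_n^λ`. -/
def Gegenbauer (lam : ℝ) (n : ℕ) (x : ℝ) : ℝ :=
  ∑ k ∈ Finset.range (n / 2 + 1),
    ((-1 : ℝ) ^ k * Real.Gamma ((n : ℝ) - (k : ℝ) + lam) /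
      (Real.Gamma lam * (Nat.factorial k : ℝ) * (Nat.factorial (n - 2 * k) : ℝ))) *
      (2 * x) ^ (n - 2 * k)

/-- The terminating hypergeometric polynomial `₂F₁(−m, b; c; z)`. -/
def hyp2F1 (m : ℕ) (b c z : ℝ) : ℝ :=
  ∑ k ∈ Finset.range (m + 1),
    ((ascPochhammer ℝ k).eval (-(m : ℝ)) * (ascPochhammer ℝ k).eval b) /
      ((ascPochhammer ℝ k).eval c * (Nat.factorial k : ℝ)) * z ^ k

/-- The half-step fractional integral `I^λ_+`. -/
def Iplus (lam : ℝ) (f : ℝ → ℝ) (x : ℝ) : ℝ :=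
  (1 + x) ^ (-lam + 1 / 2) *
    ∫ τ in (-1 : ℝ)..x, (x - τ) ^ (-(1 / 2) : ℝ) * (1 + τ) ^ lam * f τ

/-- The half-step fractional integral `I^λ_−`. -/
def Iminus (lam : ℝ) (f : ℝ → ℝ) (x : ℝ) : ℝ :=
  (1 - x) ^ (-lam + 1 / 2) *
    ∫ τ in x..(1 : ℝ), (τ - x) ^ (-(1 / 2) : ℝ) * (1 - τ) ^ lam * f τ

/-- `𝓘^λ_+ = I^λ_+ + I^λ_−`. -/
def calIplus (lam : ℝ) (f : ℝ → ℝ) (x : ℝ) : ℝ := Iplus lam f x + Iminus lam f x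

/-- `𝓘^λ_− = I^λ_+ − I^λ_−`. -/
def calIminus (lam : ℝ) (f : ℝ → ℝ) (x : ℝ) : ℝ := Iplus lam f x - Iminus lam f x

/-- The half-step fractional derivative `D^λ_+`. -/
def Dplus (lam : ℝ) (f : ℝ → ℝ) (x : ℝ) : ℝ :=
  (1 + x) *
    deriv (fun y : ℝ => (1 + y) ^ (-lam) *
      ∫ τ in (-1 : ℝ)..y, (y - τ) ^ (-(1 / 2) : ℝ) * (1 + τ) ^ (lam - 1 / 2) * f τ) x

/-- The half-step fractional derivative `D^λ_−`. -/
def Dminus (lam : ℝ) (f : ℝ → ℝ) (x : ℝ) : ℝ :=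
  (1 - x) *
    deriv (fun y : ℝ => (1 - y) ^ (-lam) *
      ∫ τ in y..(1 : ℝ), (τ - y) ^ (-(1 / 2) : ℝ) * (1 - τ) ^ (lam - 1 / 2) * f τ) x

/-- `𝓓^λ_+ = D^λ_+ + D^λ_−`. -/
def calDplus (lam : ℝ) (f : ℝ → ℝ) (x : ℝ) : ℝ := Dplus lam f x + Dminus lam f x

/-- `𝓓^λ_− = D^λ_+ − D^λ_−`. -/
def calDminus (lam : ℝ) (f : ℝ → ℝ) (x : ℝ) : ℝ := Dplus lam f x - Dminus lam f x

/-- Normalization constant `h_n^λ` for the Gegenbauer system. -/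
def hGeg (lam : ℝ) (n : ℕ) : ℝ :=
  Real.pi * Real.Gamma (2 * lam + n) /
    ((2 : ℝ) ^ (2 * lam - 1) * (Nat.factorial n : ℝ) * (lam + n) * (Real.Gamma lam) ^ 2)

/-- The `n`-th Gegenbauer coefficient (parameter `λ`) of `g`. -/
def gegCoeff (lam : ℝ) (g : ℝ → ℝ) (n : ℕ) : ℝ :=
  (1 / hGeg lam n) *
    ∫ t in (-1 : ℝ)..1, g t * Gegenbauer lam n t * (1 - t ^ 2) ^ (lam - 1 / 2)

/-- The Chebyshev polynomial of the first kind, as a real function. -/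
def chebT (n : ℕ) (x : ℝ) : ℝ := (Polynomial.Chebyshev.T ℝ (n : ℤ)).eval x

/-- The `n`-th Chebyshev coefficient of `f`. -/
def chebCoeff (f : ℝ → ℝ) (n : ℕ) : ℝ :=
  if n = 0 then
    (1 / Real.pi) * ∫ t in (-1 : ℝ)..1, f t * (1 - t ^ 2) ^ (-(1 / 2) : ℝ)
  else
    (2 / Real.pi) * ∫ t in (-1 : ℝ)..1, f t * chebT n t * (1 - t ^ 2) ^ (-(1 / 2) : ℝ)

/-- The Legendre polynomial `P_n = C_n^{1/2}`. -/
def legendreP (n : ℕ) (x : ℝ) : ℝ := Gegenbauer (1 / 2) n x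

/-- The `n`-th Legendre coefficient of `g`. -/
def legCoeff (g : ℝ → ℝ) (n : ℕ) : ℝ :=
  ((2 * (n : ℝ) + 1) / 2) * ∫ x in (-1 : ℝ)..1, g x * legendreP n x

/-- `f` is (zonal) positive definite on the sphere `S^m ⊂ ℝ^{m+1}`. -/
def PosDefSphere (m : ℕ) (f : ℝ → ℝ) : Prop :=
  ∀ (n : ℕ) (x : Fin n → EuclideanSpace ℝ (Fin (m + 1))),
    (∀ i, ‖x i‖ = 1) → Function.Injective x →
      ∀ c : Fin n → ℝ,
        0 ≤ ∑ i : Fin n, ∑ j : Fin n, c i * c j * f (inner ℝ (x i) (x j) : ℝ)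

/-- `f` is (zonal) strictly positive definite on the sphere `S^m ⊂ ℝ^{m+1}`. -/
def StrictPosDefSphere (m : ℕ) (f : ℝ → ℝ) : Prop :=
  ∀ (n : ℕ) (x : Fin n → EuclideanSpace ℝ (Fin (m + 1))),
    (∀ i, ‖x i‖ = 1) → Function.Injective x →
      ∀ c : Fin n → ℝ, c ≠ 0 →
        0 < ∑ i : Fin n, ∑ j : Fin n, c i * c j * f (inner ℝ (x i) (x j) : ℝ)

/-- `f ∈ Λ_m`: continuous on `[−1,1]` and positive definite on `S^m`. -/
def MemLambda (m : ℕ) (f : ℝ → ℝ) : Prop :=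
  ContinuousOn f (Set.Icc (-1 : ℝ) 1) ∧ PosDefSphere m f

/-- `f ∈ Λ^+_m`: continuous on `[−1,1]` and strictly positive definite on `S^m`. -/
def MemLambdaPlus (m : ℕ) (f : ℝ → ℝ) : Prop :=
  ContinuousOn f (Set.Icc (-1 : ℝ) 1) ∧ StrictPosDefSphere m f

end

/-! Write `C_n^λ(x) = Σ_k a(k, n - 2k) (2x)^(n-2k)` with `a = gegenbauerCoeff λ`; then
`(k+1) a(k+1, m) = -(m+1) a(k, m+1)` and `(m+1) a(k, m+1) = (k+m+λ) a(k, m)`, and differentiating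
termwise these become `x C'_{n+1} = (n+1) C_{n+1} + C'_n` and `C'_{n+2} - C'_n = 2(n+1+λ) C_{n+1}`.
Telescoping the second gives `C'_{n+1} + C'_n = 2 Σ_{k ≤ n} (k+λ) C_k`; adding the first to it
evaluates `((1+x) C_{n+1})' = C_{n+1} + C'_{n+1} + x C'_{n+1}`. -/

open scoped Nat

noncomputable def gegenbauerCoeff (lam : ℝ) (k m : ℕ) : ℝ :=
  (-1) ^ k * Gamma (k + m + lam) / (Gamma lam * k ! * m !)

lemma gegenbauer_eq_sum (lam : ℝ) (n : ℕ) (x : ℝ) :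
    Gegenbauer lam n x =
      ∑ k ∈ range (n / 2 + 1), gegenbauerCoeff lam k (n - 2 * k) * (2 * x) ^ (n - 2 * k) := by
  refine sum_congr rfl fun k hk => ?_
  have h2k : 2 * k ≤ n := by have := mem_range.mp hk; omega
  rw [gegenbauerCoeff, Nat.cast_sub h2k]
  push_cast
  ring_nf

lemma succ_mul_gegenbauerCoeff_succ_left (lam : ℝ) (k m : ℕ) :
    ((k : ℝ) + 1) * gegenbauerCoeff lam (k + 1) m =
      -(((m : ℝ) + 1) * gegenbauerCoeff lam k (m + 1)) := by
  simp only [gegenbauerCoeff, Nat.factorial_succ]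
  push_cast
  rw [show (k : ℝ) + 1 + m + lam = k + (m + 1) + lam by ring]
  field_simp
  ring

lemma succ_mul_gegenbauerCoeff_succ_right (lam : ℝ) (k m : ℕ) (h : (k : ℝ) + m + lam ≠ 0) :
    ((m : ℝ) + 1) * gegenbauerCoeff lam k (m + 1) = ((k : ℝ) + m + lam) * gegenbauerCoeff lam k m := by
  simp only [gegenbauerCoeff, Nat.factorial_succ]
  push_cast
  rw [show (k : ℝ) + (m + 1) + lam = k + m + lam + 1 by ring, Gamma_add_one h]
  field_simp

lemma hasDerivAt_gegenbauer (lam : ℝ) (n : ℕ) (x : ℝ) :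
    HasDerivAt (Gegenbauer lam n)
      (∑ k ∈ range (n / 2 + 1), gegenbauerCoeff lam k (n - 2 * k) *
        (2 * ((n - 2 * k : ℕ) : ℝ) * (2 * x) ^ (n - 2 * k - 1))) x := by
  rw [show Gegenbauer lam n = _ from funext (gegenbauer_eq_sum lam n)]
  refine HasDerivAt.fun_sum fun k _ => HasDerivAt.const_mul _ ?_
  have h := ((hasDerivAt_id' x).const_mul (2 : ℝ)).fun_pow (n - 2 * k)
  convert h using 1
  ring

lemma deriv_gegenbauer (lam : ℝ) (n : ℕ) (x : ℝ) :
    deriv (Gegenbauer lam n) x =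
      ∑ k ∈ range (n / 2 + 1), gegenbauerCoeff lam k (n - 2 * k) *
        (2 * ((n - 2 * k : ℕ) : ℝ) * (2 * x) ^ (n - 2 * k - 1)) :=
  (hasDerivAt_gegenbauer lam n x).deriv

lemma sum_range_div_two_succ_eq_of_eq_zero {M : Type*} [AddCommMonoid M] (n : ℕ) (f : ℕ → M)
    (hf : ∀ k, 2 * k = n → f k = 0) :
    ∑ k ∈ range (n / 2 + 1), f k = ∑ k ∈ range ((n + 1) / 2), f k := by
  refine (sum_subset (fun k hk => ?_) fun k hk hk' => hf k ?_).symm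
  · simp only [mem_range] at hk ⊢; omega
  · simp only [mem_range] at hk hk'; omega

lemma mul_two_mul_pow_sub_one (x : ℝ) (m : ℕ) :
    x * (2 * (m : ℝ) * (2 * x) ^ (m - 1)) = m * (2 * x) ^ m := by
  cases m with
  | zero => simp
  | succ m => rw [Nat.add_sub_cancel, pow_succ]; ring

lemma mul_deriv_gegenbauer_succ (lam : ℝ) (n : ℕ) (x : ℝ) :
    x * deriv (Gegenbauer lam (n + 1)) x =
      ((n : ℝ) + 1) * Gegenbauer lam (n + 1) x + deriv (Gegenbauer lam n) x := by
  rw [deriv_gegenbauer, mul_sum, gegenbauer_eq_sum, mul_sum, ← sub_eq_iff_eq_add',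
    ← sum_sub_distrib, sum_range_succ', deriv_gegenbauer, sum_range_div_two_succ_eq_of_eq_zero]
  · refine (add_eq_left.mpr ?_).trans (sum_congr rfl fun k hk => ?_)
    · rw [mul_left_comm x, mul_two_mul_pow_sub_one]
      push_cast
      ring
    · obtain ⟨m, rfl⟩ : ∃ m, n = 2 * k + m + 1 := ⟨n - (2 * k + 1), by have := mem_range.mp hk; omega⟩
      rw [show 2 * k + m + 1 + 1 - 2 * (k + 1) = m by omega, show 2 * k + m + 1 - 2 * k = m + 1 by omega,
        mul_left_comm x, mul_two_mul_pow_sub_one, Nat.add_sub_cancel]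
      push_cast
      linear_combination (-2 * (2 * x) ^ m) * succ_mul_gegenbauerCoeff_succ_left lam k m
  · intro k hk
    simp [← hk]

lemma deriv_gegenbauer_add_two (lam : ℝ) (hlam : 0 < lam) (n : ℕ) (x : ℝ) :
    deriv (Gegenbauer lam (n + 2)) x =
      deriv (Gegenbauer lam n) x + 2 * ((n : ℝ) + 1 + lam) * Gegenbauer lam (n + 1) x := by
  rw [deriv_gegenbauer, deriv_gegenbauer, gegenbauer_eq_sum, ← sub_eq_iff_eq_add',
    show (n + 2) / 2 + 1 = n / 2 + 1 + 1 by omega, sum_range_succ', add_sub_right_comm,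
    ← sum_sub_distrib, sum_range_div_two_succ_eq_of_eq_zero, sum_range_succ', mul_add, mul_sum]
  · refine congrArg₂ (· + ·) (sum_congr rfl fun k hk => ?_) ?_
    · obtain ⟨m, rfl⟩ : ∃ m, n = 2 * k + m + 1 := ⟨n - (2 * k + 1), by have := mem_range.mp hk; omega⟩
      rw [show 2 * k + m + 1 + 2 - 2 * (k + 1) = m + 1 by omega,
        show 2 * k + m + 1 + 1 - 2 * (k + 1) = m by omega,
        show 2 * k + m + 1 - 2 * k = m + 1 by omega, Nat.add_sub_cancel]
      have hm := succ_mul_gegenbauerCoeff_succ_right lam (k + 1) m (by positivity)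
      push_cast at hm ⊢
      linear_combination (2 * (2 * x) ^ m) * (hm - succ_mul_gegenbauerCoeff_succ_left lam k m)
    · rw [mul_zero, Nat.sub_zero, Nat.sub_zero, show n + 2 - 1 = n + 1 by omega]
      have hm := succ_mul_gegenbauerCoeff_succ_right lam 0 (n + 1) (by positivity)
      push_cast at hm ⊢
      linear_combination (2 * (2 * x) ^ (n + 1)) * hm
  · intro k hk
    rw [show n + 2 - 2 * (k + 1) = n - 2 * k by omega]
    simp [← hk]

lemma deriv_gegenbauer_succ_add_deriv_gegenbauer (lam : ℝ) (hlam : 0 < lam) (n : ℕ) (x : ℝ) :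
    deriv (Gegenbauer lam (n + 1)) x + deriv (Gegenbauer lam n) x =
      2 * ∑ k ∈ range (n + 1), ((k : ℝ) + lam) * Gegenbauer lam k x := by
  induction n with
  | zero =>
    have h := succ_mul_gegenbauerCoeff_succ_right lam 0 0 (by positivity)
    simp only [CharP.cast_eq_zero, zero_add, one_mul] at h
    simp [deriv_gegenbauer, gegenbauer_eq_sum, h, mul_comm]
  | succ n ih =>
    rw [deriv_gegenbauer_add_two lam hlam, sum_range_succ]
    push_cast
    linear_combination ih

theorem stmt6_general (lam : ℝ) (hlam : 0 < lam) (n : ℕ) (x : ℝ) :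
    deriv (fun y : ℝ => (1 + y) * Gegenbauer lam n y) x =
      ((n : ℝ) + 1) * Gegenbauer lam n x +
        2 * ∑ k ∈ Finset.range n, ((k : ℝ) + lam) * Gegenbauer lam k x := by
  rw [(((hasDerivAt_id' x).const_add 1).fun_mul (hasDerivAt_gegenbauer lam n x)).deriv,
    ← deriv_gegenbauer]
  cases n with
  | zero => simp [deriv_gegenbauer]
  | succ n =>
    push_cast
    linear_combination mul_deriv_gegenbauer_succ lam n x +
      deriv_gegenbauer_succ_add_deriv_gegenbauer lam hlam n x

/-- `d/dx{(1+x) C_n^λ(x)} = (n+1) C_n^λ(x) + 2 Σ_{k=0}^{n−1} (k+λ) C_k^λ(x)`. -/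
theorem stmt6 (lam : ℝ) (hlam : 0 < lam) (n : ℕ) (x : ℝ) (hx : x ∈ Set.Icc (-1 : ℝ) 1) :
    deriv (fun y : ℝ => (1 + y) * Gegenbauer lam n y) x =
      ((n : ℝ) + 1) * Gegenbauer lam n x +
        2 * ∑ k ∈ Finset.range n, ((k : ℝ) + lam) * Gegenbauer lam k x :=
  stmt6_general lam hlam n x
end

section
/- For every λ > 1/2, n ∈ ℕ₀ and x ∈ (−1,1), d/dx{(1+x)^{λ+1}(1−x)^λ C_n^{λ+1/2}(x)} = (1+x)(1−x²)^{λ−1} Q_{n+1}(x), where Q_{n+1}(x) = (1−x) C_n^{λ+1/2}(x) − (n+1)((2λ+n)/(2λ−1)) C_{n+1}^{λ−1/2}(x). -/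
/-!
With `ν = λ - 1/2`, the product rule and `d/dx[(1+x)^(λ+1)(1-x)^λ] = (1+x)(1-x²)^(λ-1)(1-x-2λx)`
reduce the claim to the Gegenbauer identity
`(2ν+1) x C_n^{ν+1}(x) - (1-x²) (C_n^{ν+1})'(x) = (n+1)(n+2ν+1)/(2ν) C_{n+1}^ν(x)`.
In the explicit expansion in powers of `2x`, the coefficient of `(2x)^(n+1-2k)` on the left collects
the `k`-th and `(k-1)`-th terms of `C_n^{ν+1}`, and `Γ(s+1) = s Γ(s)` matches their sum with the
`k`-th term of `C_{n+1}^ν`.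
-/

open Real MeasureTheory Finset intervalIntegral

theorem hasDerivAt_sum_mul_two_mul_pow {ι : Type*} (s : Finset ι) (a : ι → ℝ) (e : ι → ℕ)
    (x : ℝ) :
    HasDerivAt (fun y => ∑ i ∈ s, a i * (2 * y) ^ e i)
      (∑ i ∈ s, a i * (e i * (2 * x) ^ (e i - 1) * 2)) x :=
  HasDerivAt.fun_sum fun i _ =>
    (((hasDerivAt_id x).const_mul 2).pow (e i)).const_mul (a i) |>.congr_deriv (by simp)

theorem mul_two_mul_pow_sub_mul_deriv (ν x A : ℝ) (d : ℕ) :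
    (2 * ν + 1) * x * (A * (2 * x) ^ d) - (1 - x ^ 2) * (A * (d * (2 * x) ^ (d - 1) * 2)) =
      A * ((2 * ν + 1 + d) / 2) * (2 * x) ^ (d + 1) - 2 * d * A * (2 * x) ^ (d - 1) := by
  rcases d with _ | d
  · simp only [pow_zero, CharP.cast_eq_zero]
    ring
  · simp only [Nat.add_sub_cancel]
    push_cast
    ring

theorem Real.rpow_eq_rpow_sub_one_mul {u : ℝ} (hu : u ≠ 0) (a : ℝ) : u ^ a = u ^ (a - 1) * u := by
  rw [← Real.rpow_add_one hu, sub_add_cancel]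

section Weight

variable {x : ℝ}

theorem one_sub_sq_rpow_eq (a : ℝ) (hx : x ∈ Set.Icc (-1 : ℝ) 1) :
    (1 - x ^ 2) ^ a = (1 + x) ^ a * (1 - x) ^ a := by
  rw [show 1 - x ^ 2 = (1 + x) * (1 - x) by ring, Real.mul_rpow] <;> linarith [hx.1, hx.2]

theorem one_add_rpow_mul_one_sub_rpow_eq (a : ℝ) (hx : x ∈ Set.Ioo (-1 : ℝ) 1) :
    (1 + x) ^ (a + 1) * (1 - x) ^ a = (1 + x) * (1 - x ^ 2) ^ (a - 1) * (1 - x ^ 2) := by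
  have hp : 1 + x ≠ 0 := by linarith [hx.1]
  have hm : 1 - x ≠ 0 := by linarith [hx.2]
  rw [one_sub_sq_rpow_eq _ (Set.Ioo_subset_Icc_self hx), Real.rpow_add_one hp,
    Real.rpow_eq_rpow_sub_one_mul hp a, Real.rpow_eq_rpow_sub_one_mul hm a]
  ring

theorem hasDerivAt_one_add_rpow_mul_one_sub_rpow (a : ℝ) (hx : x ∈ Set.Ioo (-1 : ℝ) 1) :
    HasDerivAt (fun y => (1 + y) ^ (a + 1) * (1 - y) ^ a)
      ((1 + x) * (1 - x ^ 2) ^ (a - 1) * (1 - x - 2 * a * x)) x := by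
  have hp : 1 + x ≠ 0 := by linarith [hx.1]
  have hm : 1 - x ≠ 0 := by linarith [hx.2]
  have hplus := ((hasDerivAt_id x).const_add 1).rpow_const (p := a + 1) (Or.inl hp)
  have hminus := ((hasDerivAt_id x).const_sub 1).rpow_const (p := a) (Or.inl hm)
  refine (hplus.mul hminus).congr_deriv ?_
  rw [one_sub_sq_rpow_eq _ (Set.Ioo_subset_Icc_self hx), id, add_sub_cancel_right,
    Real.rpow_add_one hp, Real.rpow_eq_rpow_sub_one_mul hp a, Real.rpow_eq_rpow_sub_one_mul hm a]
  ring

end Weight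

namespace Gegenbauer

-- Zero past `⌊n/2⌋`, so that the expansions of `C_n` and `C_{n+1}` can be summed over one range.
noncomputable def coeff (lam : ℝ) (n k : ℕ) : ℝ :=
  if 2 * k ≤ n then
    (-1 : ℝ) ^ k * Real.Gamma ((n : ℝ) - (k : ℝ) + lam) /
      (Real.Gamma lam * (Nat.factorial k : ℝ) * (Nat.factorial (n - 2 * k) : ℝ))
  else 0

theorem coeff_of_lt {lam : ℝ} {n k : ℕ} (h : n < 2 * k) : coeff lam n k = 0 :=
  if_neg (by omega)

theorem coeff_two_mul_add (lam : ℝ) (k d : ℕ) :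
    coeff lam (2 * k + d) k =
      (-1 : ℝ) ^ k * Real.Gamma (k + d + lam) / (Real.Gamma lam * k.factorial * d.factorial) := by
  rw [coeff, if_pos (by omega), Nat.add_sub_cancel_left,
    show ((2 * k + d : ℕ) : ℝ) - k + lam = k + d + lam by push_cast; ring]

theorem eq_sum_coeff (lam : ℝ) {n N : ℕ} (hN : n / 2 < N) (x : ℝ) :
    Gegenbauer lam n x = ∑ k ∈ range N, coeff lam n k * (2 * x) ^ (n - 2 * k) := by
  refine Finset.sum_subset_zero_on_sdiff (by simpa using hN) (fun k hk => ?_) (fun k hk => ?_)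
  · rw [coeff_of_lt (by simp at hk; omega), zero_mul]
  · rw [coeff, if_pos (by simp at hk; omega)]

variable {ν : ℝ}

theorem coeff_succ_zero (hν : 0 < ν) (n : ℕ) :
    ((n : ℝ) + 1) * (((n : ℝ) + 2 * ν + 1) / (2 * ν)) * coeff ν (n + 1) 0 =
      coeff (ν + 1) n 0 * ((2 * ν + 1 + n) / 2) := by
  have h1 := coeff_two_mul_add ν 0 (n + 1)
  have h2 := coeff_two_mul_add (ν + 1) 0 n
  simp only [mul_zero, zero_add] at h1 h2
  rw [h1, h2, Real.Gamma_add_one hν.ne', Nat.factorial_succ]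
  have hΓ := (Real.Gamma_pos_of_pos hν).ne'
  push_cast
  rw [show (0 : ℝ) + (n + 1) + ν = 0 + n + (ν + 1) by ring]
  field_simp
  ring

theorem coeff_succ_succ (hν : 0 < ν) (n k : ℕ) :
    ((n : ℝ) + 1) * (((n : ℝ) + 2 * ν + 1) / (2 * ν)) * coeff ν (n + 1) (k + 1) =
      coeff (ν + 1) n (k + 1) * ((2 * ν + 1 + (n - 2 * (k + 1) : ℕ)) / 2) -
        2 * (n - 2 * k : ℕ) * coeff (ν + 1) n k := by
  have hΓ := (Real.Gamma_pos_of_pos hν).ne'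
  obtain h | rfl | ⟨d, rfl⟩ : n < 2 * k + 1 ∨ n = 2 * k + 1 ∨ ∃ d, n = 2 * k + d + 2 := by
    rcases Nat.lt_or_ge n (2 * k + 2) with h | h
    · omega
    · exact Or.inr (Or.inr ⟨n - 2 * k - 2, by omega⟩)
  · have hk : ((n - 2 * k : ℕ) : ℝ) * coeff (ν + 1) n k = 0 := by
      rcases (show n < 2 * k ∨ n = 2 * k by omega) with h' | rfl
      · rw [coeff_of_lt h', mul_zero]
      · simp
    rw [coeff_of_lt (n := n + 1) (by omega), coeff_of_lt (n := n) (by omega), mul_assoc 2, hk]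
    ring
  · have h1 := coeff_two_mul_add ν (k + 1) 0
    rw [show 2 * (k + 1) + 0 = 2 * k + 1 + 1 by ring] at h1
    rw [coeff_of_lt (n := 2 * k + 1) (k := k + 1) (by omega), h1, coeff_two_mul_add,
      Real.Gamma_add_one hν.ne', show 2 * k + 1 - 2 * k = 1 by omega]
    push_cast
    rw [show (k : ℝ) + 1 + (ν + 1) = (k + 1 + 0 + ν) + 1 by ring,
      Real.Gamma_add_one (by positivity)]
    simp only [Nat.factorial_succ, Nat.factorial_zero]
    push_cast
    field_simp
    ring
  · have h1 := coeff_two_mul_add ν (k + 1) (d + 1)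
    have h2 := coeff_two_mul_add (ν + 1) (k + 1) d
    have h3 := coeff_two_mul_add (ν + 1) k (d + 2)
    rw [show 2 * (k + 1) + (d + 1) = 2 * k + d + 2 + 1 by ring] at h1
    rw [show 2 * (k + 1) + d = 2 * k + d + 2 by ring] at h2
    rw [← add_assoc] at h3
    rw [h1, h2, h3, show 2 * k + d + 2 - 2 * (k + 1) = d by omega,
      show 2 * k + d + 2 - 2 * k = d + 2 by omega, Real.Gamma_add_one hν.ne']
    push_cast
    rw [show (k : ℝ) + (d + 2) + (ν + 1) = (k + 1 + (d + 1) + ν) + 1 by ring,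
      show (k : ℝ) + 1 + d + (ν + 1) = k + 1 + (d + 1) + ν by ring,
      Real.Gamma_add_one (by positivity)]
    simp only [Nat.factorial_succ]
    push_cast
    field_simp
    ring

theorem hasDerivAt (lam : ℝ) {n N : ℕ} (hN : n / 2 < N) (x : ℝ) :
    HasDerivAt (Gegenbauer lam n)
      (∑ k ∈ range N, coeff lam n k * ((n - 2 * k : ℕ) * (2 * x) ^ (n - 2 * k - 1) * 2)) x := by
  rw [show Gegenbauer lam n = _ from funext (eq_sum_coeff lam hN)]
  exact hasDerivAt_sum_mul_two_mul_pow _ _ _ x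

theorem mul_sub_one_sub_sq_mul_deriv (hν : 0 < ν) (n : ℕ) (x : ℝ) :
    (2 * ν + 1) * x * Gegenbauer (ν + 1) n x - (1 - x ^ 2) * deriv (Gegenbauer (ν + 1) n) x =
      ((n : ℝ) + 1) * (((n : ℝ) + 2 * ν + 1) / (2 * ν)) * Gegenbauer ν (n + 1) x := by
  set M := n / 2 + 1
  set K := ((n : ℝ) + 1) * (((n : ℝ) + 2 * ν + 1) / (2 * ν))
  set a := coeff (ν + 1) n
  set S : ℕ → ℝ := fun k => a k * ((2 * ν + 1 + (n - 2 * k : ℕ)) / 2) * (2 * x) ^ (n - 2 * k + 1)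
  set T : ℕ → ℝ := fun k => 2 * (n - 2 * k : ℕ) * a k * (2 * x) ^ (n - 2 * k - 1)
  -- The `k`-th term of the left side is `S k - T k`, of degrees `n + 1 - 2k` and `n - 1 - 2k`.
  have hT : T M = 0 := by
    simp only [T, a, coeff_of_lt (show n < 2 * M by omega), mul_zero, zero_mul]
  have h0 : K * (coeff ν (n + 1) 0 * (2 * x) ^ (n + 1 - 2 * 0)) = S 0 := by
    simp only [S, a, mul_zero, Nat.sub_zero]
    rw [← mul_assoc, coeff_succ_zero hν]
  have hsucc (k : ℕ) :
      K * (coeff ν (n + 1) (k + 1) * (2 * x) ^ (n + 1 - 2 * (k + 1))) = S (k + 1) - T k := by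
    have hS : S (k + 1) = a (k + 1) * ((2 * ν + 1 + (n - 2 * (k + 1) : ℕ)) / 2) *
        (2 * x) ^ (n - 2 * k - 1) := by
      rcases Nat.lt_or_ge n (2 * (k + 1)) with h | h
      · simp only [S, a, coeff_of_lt h, zero_mul]
      · simp only [S]
        rw [show n - 2 * (k + 1) + 1 = n - 2 * k - 1 by omega]
    rw [hS, show n + 1 - 2 * (k + 1) = n - 2 * k - 1 by omega, ← mul_assoc, coeff_succ_succ hν]
    ring
  rw [(hasDerivAt (ν + 1) (show n / 2 < M + 1 by omega) x).deriv,
    eq_sum_coeff (ν + 1) (show n / 2 < M + 1 by omega),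
    eq_sum_coeff ν (show (n + 1) / 2 < M + 1 by omega), mul_sum, mul_sum, mul_sum,
    ← sum_sub_distrib]
  simp only [mul_two_mul_pow_sub_mul_deriv]
  rw [sum_sub_distrib, sum_range_succ T M, hT, add_zero, sum_range_succ' S M,
    sum_range_succ' _ M, h0, sum_congr rfl fun k _ => hsucc k, sum_sub_distrib]
  ring

end Gegenbauer

/-- derivative of `(1+x)^{λ+1}(1−x)^λ C_n^{λ+1/2}(x)`. -/
theorem stmt8 (lam : ℝ) (hlam : 1 / 2 < lam) (n : ℕ) (x : ℝ) (hx : x ∈ Set.Ioo (-1 : ℝ) 1) :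
    deriv (fun y : ℝ => (1 + y) ^ (lam + 1) * (1 - y) ^ lam * Gegenbauer (lam + 1 / 2) n y) x =
      (1 + x) * (1 - x ^ 2) ^ (lam - 1) *
        ((1 - x) * Gegenbauer (lam + 1 / 2) n x -
          ((n : ℝ) + 1) * ((2 * lam + (n : ℝ)) / (2 * lam - 1)) * Gegenbauer (lam - 1 / 2) (n + 1) x) := by
  have hC := (Gegenbauer.hasDerivAt (lam + 1 / 2) (Nat.lt_succ_self (n / 2)) x).differentiableAt
  have hw := hasDerivAt_one_add_rpow_mul_one_sub_rpow lam hx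
  have hkey := Gegenbauer.mul_sub_one_sub_sq_mul_deriv (ν := lam - 1 / 2) (by linarith) n x
  rw [show lam - 1 / 2 + 1 = lam + 1 / 2 by ring] at hkey
  rw [(hw.fun_mul hC.hasDerivAt).deriv, one_add_rpow_mul_one_sub_rpow_eq lam hx]
  have h2lam : 2 * lam - 1 ≠ 0 := by linarith
  field_simp at hkey ⊢
  linear_combination (-(1 + x) * (1 - x ^ 2) ^ (lam - 1)) * hkey
end

section
/- For every λ > 1, n ∈ ℕ and x ∈ [−1,1], (n+2λ−1) C_{n+1}^{λ−1}(x) − (n+2) C_{n+2}^{λ−1}(x) = (2λ−2)(1−x)[C_{n+1}^λ(x) + C_n^λ(x)]. -/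
open Real MeasureTheory Finset intervalIntegral

/-!
The identity is the difference of the two contiguous relations
`(n + 2λ - 1) C_{n+1}^{λ-1} = (2λ - 2) (C_{n+1}^λ - x C_n^λ)` and
`(n + 2) C_{n+2}^{λ-1} = (2λ - 2) (x C_{n+1}^λ - C_n^λ)`.
Once the summands of the explicit formula are extended by zero beyond `k = ⌊n/2⌋`, both relations
hold summand by summand (in the second one the summand index is shifted by one), and each summand
identity reduces to `Γ(s + 1) = s Γ(s)` and `Γ(λ) = (λ - 1) Γ(λ - 1)`.
-/

open Nat

lemma Gamma_eq_sub_one_mul {lam : ℝ} (h : lam ≠ 1) : Gamma lam = (lam - 1) * Gamma (lam - 1) := by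
  simpa using Real.Gamma_add_one (sub_ne_zero.2 h)

noncomputable def gegenbauerTerm (lam : ℝ) (n k : ℕ) (x : ℝ) : ℝ :=
  if 2 * k ≤ n then
    (-1 : ℝ) ^ k * Gamma ((n : ℝ) - (k : ℝ) + lam) /
      (Gamma lam * (k ! : ℝ) * ((n - 2 * k)! : ℝ)) * (2 * x) ^ (n - 2 * k)
  else 0

lemma gegenbauerTerm_of_lt {lam : ℝ} {n k : ℕ} (h : n < 2 * k) (x : ℝ) :
    gegenbauerTerm lam n k x = 0 :=
  if_neg (not_le.2 h)

lemma gegenbauerTerm_add_two_mul (lam : ℝ) (m k : ℕ) (x : ℝ) :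
    gegenbauerTerm lam (m + 2 * k) k x =
      (-1 : ℝ) ^ k * Gamma (m + k + lam) / (Gamma lam * (k ! : ℝ) * (m ! : ℝ)) * (2 * x) ^ m := by
  rw [gegenbauerTerm, if_pos (by omega), Nat.add_sub_cancel]
  push_cast
  ring_nf

lemma gegenbauer_eq_sum_gegenbauerTerm (lam : ℝ) {n N : ℕ} (hN : n / 2 < N) (x : ℝ) :
    Gegenbauer lam n x = ∑ k ∈ range N, gegenbauerTerm lam n k x := by
  rw [Gegenbauer]
  refine (sum_congr rfl fun k hk => ?_).trans
    (sum_subset (range_subset_range.2 hN) fun k _ hk => ?_)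
  · rw [gegenbauerTerm, if_pos (by rw [mem_range] at hk; omega)]
  · exact gegenbauerTerm_of_lt (by rw [mem_range] at hk; omega) x

lemma gegenbauerTerm_sub_one_succ {lam : ℝ} (hlam : 1 < lam) (n k : ℕ) (x : ℝ) :
    ((n : ℝ) + 2 * lam - 1) * gegenbauerTerm (lam - 1) (n + 1) k x =
      (2 * lam - 2) * (gegenbauerTerm lam (n + 1) k x - x * gegenbauerTerm lam n k x) := by
  have hlam₀ : 0 < lam - 1 := sub_pos.2 hlam
  have hΓ : Gamma (lam - 1) ≠ 0 := (Gamma_pos_of_pos hlam₀).ne'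
  obtain h | h | h : 2 * k ≤ n ∨ 2 * k = n + 1 ∨ n + 1 < 2 * k := by omega
  · obtain ⟨m, rfl⟩ : ∃ m, n = m + 2 * k := ⟨n - 2 * k, by omega⟩
    rw [show m + 2 * k + 1 = (m + 1) + 2 * k by ring, gegenbauerTerm_add_two_mul,
      gegenbauerTerm_add_two_mul, gegenbauerTerm_add_two_mul]
    have hΓsucc : Gamma ((m + 1 : ℕ) + k + lam) = (m + k + lam) * Gamma (m + k + lam) := by
      rw [← Gamma_add_one (by positivity)]; push_cast; ring_nf
    rw [hΓsucc, show ((m + 1 : ℕ) : ℝ) + k + (lam - 1) = m + k + lam by push_cast; ring,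
      factorial_succ, pow_succ, Gamma_eq_sub_one_mul hlam.ne']
    field_simp
    push_cast
    ring
  · rw [gegenbauerTerm_of_lt (by omega : n < 2 * k) x, show n + 1 = 0 + 2 * k by omega,
      gegenbauerTerm_add_two_mul, gegenbauerTerm_add_two_mul, Nat.cast_zero, zero_add]
    have hn : (n : ℝ) = 2 * k - 1 := by rw [eq_sub_iff_add_eq]; exact_mod_cast h.symm
    have hΓsucc : Gamma (k + lam) = (k + (lam - 1)) * Gamma (k + (lam - 1)) := by
      rw [← Gamma_add_one (by positivity)]; ring_nf
    rw [hΓsucc, hn, Gamma_eq_sub_one_mul hlam.ne']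
    field_simp
    ring
  · rw [gegenbauerTerm_of_lt h x, gegenbauerTerm_of_lt (by omega) x,
      gegenbauerTerm_of_lt (by omega) x]
    ring

lemma gegenbauerTerm_sub_one_add_two_zero {lam : ℝ} (hlam : 1 < lam) (n : ℕ) (x : ℝ) :
    ((n : ℝ) + 2) * gegenbauerTerm (lam - 1) (n + 2) 0 x =
      (2 * lam - 2) * (x * gegenbauerTerm lam (n + 1) 0 x) := by
  have hΓ : Gamma (lam - 1) ≠ 0 := (Gamma_pos_of_pos (sub_pos.2 hlam)).ne'
  have hlam₁ : lam - 1 ≠ 0 := (sub_pos.2 hlam).ne'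
  have h₂ := gegenbauerTerm_add_two_mul (lam - 1) (n + 2) 0 x
  have h₁ := gegenbauerTerm_add_two_mul lam (n + 1) 0 x
  rw [mul_zero, add_zero] at h₁ h₂
  rw [h₁, h₂, show (n + 2 : ℕ) = (n + 1) + 1 by ring, factorial_succ (n + 1), pow_succ,
    Gamma_eq_sub_one_mul hlam.ne']
  field_simp
  push_cast
  ring_nf

lemma gegenbauerTerm_sub_one_add_two_succ {lam : ℝ} (hlam : 1 < lam) (n k : ℕ) (x : ℝ) :
    ((n : ℝ) + 2) * gegenbauerTerm (lam - 1) (n + 2) (k + 1) x =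
      (2 * lam - 2) * (x * gegenbauerTerm lam (n + 1) (k + 1) x - gegenbauerTerm lam n k x) := by
  have hΓ : Gamma (lam - 1) ≠ 0 := (Gamma_pos_of_pos (sub_pos.2 hlam)).ne'
  have hlam₁ : lam - 1 ≠ 0 := (sub_pos.2 hlam).ne'
  rcases lt_or_ge n (2 * k) with h | h
  · rw [gegenbauerTerm_of_lt h x, gegenbauerTerm_of_lt (by omega) x,
      gegenbauerTerm_of_lt (by omega) x]
    ring
  obtain ⟨m, rfl⟩ : ∃ m, n = m + 2 * k := ⟨n - 2 * k, by omega⟩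
  rw [show m + 2 * k + 2 = m + 2 * (k + 1) by ring, gegenbauerTerm_add_two_mul,
    gegenbauerTerm_add_two_mul, show (m : ℝ) + (k + 1 : ℕ) + (lam - 1) = m + k + lam by
      push_cast; ring]
  rcases m with _ | m
  · rw [gegenbauerTerm_of_lt (by omega) x, factorial_succ k, Gamma_eq_sub_one_mul hlam.ne']
    field_simp
    push_cast
    ring
  · rw [show m + 1 + 2 * k + 1 = m + 2 * (k + 1) by ring, gegenbauerTerm_add_two_mul,
      show (m : ℝ) + (k + 1 : ℕ) + lam = (m + 1 : ℕ) + k + lam by push_cast; ring,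
      factorial_succ k, factorial_succ m, pow_succ, Gamma_eq_sub_one_mul hlam.ne']
    field_simp
    push_cast
    ring

theorem gegenbauer_sub_one_succ {lam : ℝ} (hlam : 1 < lam) (n : ℕ) (x : ℝ) :
    ((n : ℝ) + 2 * lam - 1) * Gegenbauer (lam - 1) (n + 1) x =
      (2 * lam - 2) * (Gegenbauer lam (n + 1) x - x * Gegenbauer lam n x) := by
  have hN : ∀ j ≤ n + 1, j / 2 < n / 2 + 2 := fun j hj => by omega
  simp only [gegenbauer_eq_sum_gegenbauerTerm _ (hN _ le_rfl),
    gegenbauer_eq_sum_gegenbauerTerm _ (hN _ n.le_succ), mul_sum, ← sum_sub_distrib]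
  exact sum_congr rfl fun k _ => gegenbauerTerm_sub_one_succ hlam n k x

theorem gegenbauer_sub_one_add_two {lam : ℝ} (hlam : 1 < lam) (n : ℕ) (x : ℝ) :
    ((n : ℝ) + 2) * Gegenbauer (lam - 1) (n + 2) x =
      (2 * lam - 2) * (x * Gegenbauer lam (n + 1) x - Gegenbauer lam n x) := by
  rw [gegenbauer_eq_sum_gegenbauerTerm _ (by omega : (n + 2) / 2 < n / 2 + 2),
    gegenbauer_eq_sum_gegenbauerTerm _ (by omega : (n + 1) / 2 < n / 2 + 2),
    gegenbauer_eq_sum_gegenbauerTerm _ (by omega : n / 2 < n / 2 + 1),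
    sum_range_succ' (fun k => gegenbauerTerm (lam - 1) (n + 2) k x),
    sum_range_succ' (fun k => gegenbauerTerm lam (n + 1) k x), mul_add, mul_sum,
    sum_congr rfl fun k _ => gegenbauerTerm_sub_one_add_two_succ hlam n k x,
    gegenbauerTerm_sub_one_add_two_zero hlam n x]
  simp only [mul_sum, mul_sub, mul_add, sum_sub_distrib]
  ring

theorem stmt9_general (lam : ℝ) (hlam : 1 < lam) (n : ℕ) (x : ℝ) :
    ((n : ℝ) + 2 * lam - 1) * Gegenbauer (lam - 1) (n + 1) x -
        ((n : ℝ) + 2) * Gegenbauer (lam - 1) (n + 2) x =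
      (2 * lam - 2) * (1 - x) * (Gegenbauer lam (n + 1) x + Gegenbauer lam n x) := by
  rw [gegenbauer_sub_one_succ hlam, gegenbauer_sub_one_add_two hlam]
  ring

/-- `(n+2λ−1) C_{n+1}^{λ−1} − (n+2) C_{n+2}^{λ−1} = (2λ−2)(1−x)[C_{n+1}^λ + C_n^λ]`. -/
theorem stmt9 (lam : ℝ) (hlam : 1 < lam) (n : ℕ) (hn : 1 ≤ n) (x : ℝ)
    (hx : x ∈ Set.Icc (-1 : ℝ) 1) :
    ((n : ℝ) + 2 * lam - 1) * Gegenbauer (lam - 1) (n + 1) x -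
        ((n : ℝ) + 2) * Gegenbauer (lam - 1) (n + 2) x =
      (2 * lam - 2) * (1 - x) * (Gegenbauer lam (n + 1) x + Gegenbauer lam n x) :=
  stmt9_general lam hlam n x
end

section
/- For every λ > 0, n ∈ ℕ₀ and x ∈ [−1,1], (1/Γ(λ)) ∫_x^1 (1−t)^λ (t−x)^{−1/2} C_n^{λ+1/2}(t) dt = (√π / (2 Γ(λ+1/2)(n+λ+1/2))) (1−x)^{λ−1/2} [(n+2λ) C_n^λ(x) − (n+1) C_{n+1}^λ(x)]. -/
open Real MeasureTheory Finset intervalIntegral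

/-! Expand `C_n^{λ+1/2}(t)` in powers of `1 - t`: this is the terminating hypergeometric series
`C_n^μ(t) = (2μ)_n / n! · ₂F₁(-n, n + 2μ; μ + 1/2; (1 - t)/2)`, verified by checking that it obeys
the three-term recurrence of `C_n^μ`. The substitution `t = x + (1 - x) s` turns the integral of
`(1 - t)^{λ+j} (t - x)^{-1/2}` over `[x, 1]` into `(1 - x)^{λ+j+1/2}` times a Beta integral. On the
right-hand side the constant terms of `(n + 2λ) C_n^λ` and `(n + 1) C_{n+1}^λ` cancel, and the
coefficients of `(1 - x)^{j+1}` match those on the left by `Γ(s + 1) = s Γ(s)`. -/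

open Nat

theorem integral_rpow_mul_one_sub_rpow {a b : ℝ} (ha : 0 < a) (hb : 0 < b) :
    ∫ s in (0 : ℝ)..1, s ^ (a - 1) * (1 - s) ^ (b - 1) = Gamma a * Gamma b / Gamma (a + b) := by
  apply Complex.ofReal_injective
  push_cast
  rw [← Complex.Gamma_ofReal, ← Complex.Gamma_ofReal, ← Complex.Gamma_ofReal, Complex.ofReal_add,
    ← Complex.betaIntegral_eq_Gamma_mul_div _ _ (by simpa) (by simpa), Complex.betaIntegral,
    ← integral_ofReal]
  refine integral_congr fun s hs => ?_
  rw [Set.uIcc_of_le zero_le_one] at hs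
  push_cast
  rw [Complex.ofReal_cpow hs.1, Complex.ofReal_cpow (by linarith [hs.2])]
  push_cast
  ring_nf

theorem intervalIntegrable_one_sub_rpow_mul_sub_rpow {μ ν : ℝ} (hμ : 0 ≤ μ) (hν : -1 < ν)
    (x : ℝ) : IntervalIntegrable (fun t => (1 - t) ^ μ * (t - x) ^ ν) volume x 1 := by
  have h : IntervalIntegrable (fun t : ℝ => (t - x) ^ ν) volume x 1 := by
    simpa using (intervalIntegrable_rpow' hν (a := 0) (b := 1 - x)).comp_sub_right x
  exact h.continuousOn_mul ((continuous_const.sub continuous_id).continuousOn.rpow_const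
    fun _ _ => Or.inr hμ)

theorem integral_one_sub_rpow_mul_sub_rpow {μ ν x : ℝ} (hμ : -1 < μ) (hν : -1 < ν) (hx : x < 1) :
    ∫ t in x..1, (1 - t) ^ μ * (t - x) ^ ν =
      (1 - x) ^ (μ + ν + 1) * (Gamma (ν + 1) * Gamma (μ + 1) / Gamma (μ + ν + 2)) := by
  have hc : 0 < 1 - x := by linarith
  have hsub := mul_integral_comp_mul_add (f := fun t => (1 - t) ^ μ * (t - x) ^ ν) (a := 0)
    (b := 1) (1 - x) x
  rw [mul_zero, zero_add, mul_one, sub_add_cancel] at hsub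
  have hpt : ∀ s ∈ Set.uIcc (0 : ℝ) 1, (1 - ((1 - x) * s + x)) ^ μ * ((1 - x) * s + x - x) ^ ν =
      (1 - x) ^ (μ + ν) * (s ^ (ν + 1 - 1) * (1 - s) ^ (μ + 1 - 1)) := by
    intro s hs
    rw [Set.uIcc_of_le zero_le_one] at hs
    rw [show 1 - ((1 - x) * s + x) = (1 - x) * (1 - s) by ring, add_sub_cancel_right,
      mul_rpow hc.le (by linarith [hs.2]), mul_rpow hc.le hs.1, rpow_add hc, add_sub_cancel_right,
      add_sub_cancel_right]
    ring
  rw [← hsub, integral_congr hpt, intervalIntegral.integral_const_mul,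
    integral_rpow_mul_one_sub_rpow (by linarith) (by linarith),
    rpow_add_one hc.ne', show ν + 1 + (μ + 1) = μ + ν + 2 by ring]
  ring

theorem Gegenbauer_zero {μ : ℝ} (hμ : 0 < μ) (t : ℝ) : Gegenbauer μ 0 t = 1 := by
  simp [Gegenbauer, (Gamma_pos_of_pos hμ).ne']

theorem Gegenbauer_one {μ : ℝ} (hμ : 0 < μ) (t : ℝ) : Gegenbauer μ 1 t = 2 * μ * t := by
  simp [Gegenbauer, add_comm 1 μ, Gamma_add_one hμ.ne', (Gamma_pos_of_pos hμ).ne']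
  ring

namespace Gegenbauer

/-- The `if` makes the coefficient vanish where `n - 2 * k` would truncate, so that sums may run
over any range containing `0, …, n / 2`. -/
noncomputable def monomialCoeff (μ : ℝ) (n k : ℕ) : ℝ :=
  if 2 * k ≤ n then
    (-1) ^ k * Gamma ((n : ℝ) - k + μ) / (Gamma μ * (k ! : ℝ) * ((n - 2 * k) ! : ℝ))
  else 0

theorem eq_sum_monomialCoeff (μ : ℝ) (n : ℕ) (t : ℝ) {N : ℕ} (hN : n / 2 + 1 ≤ N) :
    Gegenbauer μ n t = ∑ k ∈ range N, monomialCoeff μ n k * (2 * t) ^ (n - 2 * k) := by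
  rw [Gegenbauer, ← sum_subset (range_subset_range.mpr hN)]
  · refine sum_congr rfl fun k hk => ?_
    rw [monomialCoeff, if_pos (by rw [mem_range] at hk; omega)]
  · intro k _ hk
    rw [monomialCoeff, if_neg (by rw [mem_range] at hk; omega), zero_mul]

theorem monomialCoeff_recurrence_zero {μ : ℝ} (hμ : 0 < μ) (n : ℕ) :
    ((n : ℝ) + 2) * monomialCoeff μ (n + 2) 0 =
      ((n : ℝ) + 1 + μ) * monomialCoeff μ (n + 1) 0 := by
  simp only [monomialCoeff, if_pos (Nat.zero_le _), pow_zero, mul_zero, Nat.sub_zero,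
    factorial_zero, Nat.cast_one, CharP.cast_eq_zero, sub_zero, factorial_succ]
  push_cast
  rw [show (n : ℝ) + 2 + μ = (n + 1 + μ) + 1 by ring, Gamma_add_one (by positivity)]
  field_simp
  ring

theorem monomialCoeff_recurrence_succ {μ : ℝ} (hμ : 0 < μ) (n j : ℕ) :
    ((n : ℝ) + 2) * monomialCoeff μ (n + 2) (j + 1) =
      ((n : ℝ) + 1 + μ) * monomialCoeff μ (n + 1) (j + 1) -
        ((n : ℝ) + 2 * μ) * monomialCoeff μ n j := by
  rcases lt_or_ge n (2 * j) with hn | hn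
  · simp only [monomialCoeff, if_neg (show ¬ 2 * (j + 1) ≤ n + 2 by omega),
      if_neg (show ¬ 2 * (j + 1) ≤ n + 1 by omega), if_neg (show ¬ 2 * j ≤ n by omega)]
    ring
  obtain ⟨m, rfl⟩ := Nat.exists_eq_add_of_le hn
  rcases m with _ | m
  · simp only [Nat.add_zero, monomialCoeff, if_pos (show 2 * (j + 1) ≤ 2 * j + 2 by omega),
      if_neg (show ¬ 2 * (j + 1) ≤ 2 * j + 1 by omega), if_pos le_rfl,
      show 2 * j + 2 - 2 * (j + 1) = 0 by omega, Nat.sub_self, factorial_succ]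
    push_cast
    rw [show (2 * j + 2 : ℝ) - (j + 1) + μ = (j + μ) + 1 by ring,
      show (2 * j : ℝ) - j + μ = j + μ by ring, Gamma_add_one (by positivity)]
    field_simp
    ring
  · simp only [monomialCoeff, if_pos (show 2 * (j + 1) ≤ 2 * j + (m + 1) + 2 by omega),
      if_pos (show 2 * (j + 1) ≤ 2 * j + (m + 1) + 1 by omega),
      if_pos (show 2 * j ≤ 2 * j + (m + 1) by omega),
      show 2 * j + (m + 1) + 2 - 2 * (j + 1) = m + 1 by omega,
      show 2 * j + (m + 1) + 1 - 2 * (j + 1) = m by omega,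
      show 2 * j + (m + 1) - 2 * j = m + 1 by omega, factorial_succ]
    push_cast
    rw [show (2 * j + (m + 1) + 2 : ℝ) - (j + 1) + μ = (j + m + 1 + μ) + 1 by ring,
      show (2 * j + (m + 1) + 1 : ℝ) - (j + 1) + μ = j + m + 1 + μ by ring,
      show (2 * j + (m + 1) : ℝ) - j + μ = j + m + 1 + μ by ring, Gamma_add_one (by positivity)]
    field_simp
    ring

theorem monomialCoeff_mul_pow_mul_self (μ : ℝ) (m k : ℕ) (X : ℝ) :
    monomialCoeff μ m k * X ^ (m - 2 * k) * X = monomialCoeff μ m k * X ^ (m + 1 - 2 * k) := by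
  unfold monomialCoeff
  split_ifs with h
  · rw [mul_assoc, ← pow_succ, Nat.sub_add_comm h]
  · simp

theorem recurrence {μ : ℝ} (hμ : 0 < μ) (n : ℕ) (t : ℝ) :
    ((n : ℝ) + 2) * Gegenbauer μ (n + 2) t =
      2 * ((n : ℝ) + 1 + μ) * t * Gegenbauer μ (n + 1) t -
        ((n : ℝ) + 2 * μ) * Gegenbauer μ n t := by
  have hterm : ∀ j ∈ range (n / 2 + 1),
      ((n : ℝ) + 2) * (monomialCoeff μ (n + 2) (j + 1) * (2 * t) ^ (n + 2 - 2 * (j + 1))) =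
        2 * ((n : ℝ) + 1 + μ) * t *
            (monomialCoeff μ (n + 1) (j + 1) * (2 * t) ^ (n + 1 - 2 * (j + 1))) -
          ((n : ℝ) + 2 * μ) * (monomialCoeff μ n j * (2 * t) ^ (n - 2 * j)) := by
    intro j _
    have h := monomialCoeff_mul_pow_mul_self μ (n + 1) (j + 1) (2 * t)
    rw [show n + 1 + 1 - 2 * (j + 1) = n - 2 * j by omega] at h
    rw [show n + 2 - 2 * (j + 1) = n - 2 * j by omega]
    linear_combination (2 * t) ^ (n - 2 * j) * monomialCoeff_recurrence_succ hμ n j -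
      ((n : ℝ) + 1 + μ) * h
  rw [eq_sum_monomialCoeff μ (n + 2) t (N := n / 2 + 1 + 1) (by omega),
    eq_sum_monomialCoeff μ (n + 1) t (N := n / 2 + 1 + 1) (by omega),
    eq_sum_monomialCoeff μ n t le_rfl, sum_range_succ' _ (n / 2 + 1),
    sum_range_succ' _ (n / 2 + 1), mul_add, mul_add, mul_sum, mul_sum,
    sum_congr rfl hterm, sum_sub_distrib, ← mul_sum, ← mul_sum]
  simp only [Nat.mul_zero, Nat.sub_zero]
  linear_combination (2 * t) ^ (n + 2) * monomialCoeff_recurrence_zero hμ n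

/-- The coefficient of `(1 - t)^k` in `(2μ)_n / n! · ₂F₁(-n, n + 2μ; μ + 1/2; (1 - t)/2)`,
guarded like `monomialCoeff`. -/
noncomputable def oneSubCoeff (μ : ℝ) (n k : ℕ) : ℝ :=
  if k ≤ n then
    (-1) ^ k * Gamma (n + 2 * μ + k) * Gamma (μ + 1 / 2) /
      (Gamma (2 * μ) * ((n - k) ! : ℝ) * (k ! : ℝ) * 2 ^ k * Gamma (μ + 1 / 2 + k))
  else 0

theorem sum_oneSubCoeff_of_le (μ : ℝ) {n N : ℕ} (hN : n + 1 ≤ N) (u : ℝ) :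
    ∑ k ∈ range N, oneSubCoeff μ n k * u ^ k =
      ∑ k ∈ range (n + 1), oneSubCoeff μ n k * u ^ k := by
  refine (sum_subset (range_subset_range.mpr hN) fun k _ hk => ?_).symm
  rw [oneSubCoeff, if_neg (by simpa using hk), zero_mul]

theorem oneSubCoeff_succ_zero {μ : ℝ} (hμ : 0 < μ) (n : ℕ) :
    ((n : ℝ) + 1) * oneSubCoeff μ (n + 1) 0 = ((n : ℝ) + 2 * μ) * oneSubCoeff μ n 0 := by
  simp only [oneSubCoeff, if_pos (Nat.zero_le _), pow_zero, Nat.sub_zero, factorial_zero,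
    factorial_succ, CharP.cast_eq_zero, add_zero]
  push_cast
  rw [show (n : ℝ) + 1 + 2 * μ = (n + 2 * μ) + 1 by ring, Gamma_add_one (by positivity)]
  field_simp

theorem oneSubCoeff_recurrence_zero {μ : ℝ} (hμ : 0 < μ) (n : ℕ) :
    ((n : ℝ) + 2) * oneSubCoeff μ (n + 2) 0 =
      2 * ((n : ℝ) + 1 + μ) * oneSubCoeff μ (n + 1) 0 -
        ((n : ℝ) + 2 * μ) * oneSubCoeff μ n 0 := by
  simp only [oneSubCoeff, if_pos (Nat.zero_le _), pow_zero, Nat.sub_zero, factorial_zero,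
    factorial_succ, CharP.cast_eq_zero, add_zero]
  push_cast
  rw [show (n : ℝ) + 2 + 2 * μ = (n + 2 * μ + 1) + 1 by ring,
    show (n : ℝ) + 1 + 2 * μ = (n + 2 * μ) + 1 by ring,
    Gamma_add_one (by positivity), Gamma_add_one (by positivity)]
  field_simp
  ring

theorem oneSubCoeff_recurrence_succ {μ : ℝ} (hμ : 0 < μ) (n j : ℕ) :
    ((n : ℝ) + 2) * oneSubCoeff μ (n + 2) (j + 1) =
      2 * ((n : ℝ) + 1 + μ) * (oneSubCoeff μ (n + 1) (j + 1) - oneSubCoeff μ (n + 1) j) -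
        ((n : ℝ) + 2 * μ) * oneSubCoeff μ n (j + 1) := by
  rcases lt_or_ge (n + 1) j with hj | hj
  · simp only [oneSubCoeff, if_neg (show ¬ j + 1 ≤ n + 2 by omega),
      if_neg (show ¬ j + 1 ≤ n + 1 by omega), if_neg (show ¬ j ≤ n + 1 by omega),
      if_neg (show ¬ j + 1 ≤ n by omega)]
    ring
  rcases hj.eq_or_lt with rfl | hj
  · simp only [oneSubCoeff, if_pos le_rfl, if_neg (show ¬ n + 1 + 1 ≤ n + 1 by omega),
      if_neg (show ¬ n + 1 + 1 ≤ n by omega), Nat.sub_self, factorial_zero, factorial_succ]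
    push_cast
    rw [show (n : ℝ) + 2 + 2 * μ + (n + 1 + 1) = (n + 1 + 2 * μ + (n + 1)) + 1 + 1 by ring,
      show μ + 1 / 2 + ((n : ℝ) + 1 + 1) = (μ + 1 / 2 + (n + 1)) + 1 by ring,
      Gamma_add_one (by positivity), Gamma_add_one (by positivity), Gamma_add_one (by positivity)]
    field_simp
    ring
  obtain ⟨m, rfl⟩ := Nat.exists_eq_add_of_le (Nat.lt_succ_iff.mp hj)
  rcases m with _ | m
  · simp only [Nat.add_zero, oneSubCoeff, if_pos (show j + 1 ≤ j + 2 by omega), if_pos le_rfl,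
      if_pos (show j ≤ j + 1 by omega), if_neg (show ¬ j + 1 ≤ j by omega),
      show j + 2 - (j + 1) = 1 by omega, Nat.sub_self, show j + 1 - j = 1 by omega,
      factorial_zero, factorial_succ]
    push_cast
    rw [show (j : ℝ) + 2 + 2 * μ + (j + 1) = (2 * j + 1 + 2 * μ) + 1 + 1 by ring,
      show (j : ℝ) + 1 + 2 * μ + (j + 1) = (2 * j + 1 + 2 * μ) + 1 by ring,
      show (j : ℝ) + 1 + 2 * μ + j = 2 * j + 1 + 2 * μ by ring,
      show μ + 1 / 2 + ((j : ℝ) + 1) = (μ + 1 / 2 + j) + 1 by ring,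
      Gamma_add_one (by positivity), Gamma_add_one (by positivity), Gamma_add_one (by positivity)]
    field_simp
    ring
  · simp only [oneSubCoeff, if_pos (show j + 1 ≤ j + (m + 1) + 2 by omega),
      if_pos (show j + 1 ≤ j + (m + 1) + 1 by omega), if_pos (show j ≤ j + (m + 1) + 1 by omega),
      if_pos (show j + 1 ≤ j + (m + 1) by omega),
      show j + (m + 1) + 2 - (j + 1) = m + 2 by omega,
      show j + (m + 1) + 1 - (j + 1) = m + 1 by omega,
      show j + (m + 1) + 1 - j = m + 2 by omega, show j + (m + 1) - (j + 1) = m by omega,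
      factorial_succ]
    push_cast
    rw [show (j : ℝ) + (m + 1) + 2 + 2 * μ + (j + 1) = (2 * j + m + 2 + 2 * μ) + 1 + 1 by ring,
      show (j : ℝ) + (m + 1) + 1 + 2 * μ + (j + 1) = (2 * j + m + 2 + 2 * μ) + 1 by ring,
      show (j : ℝ) + (m + 1) + 1 + 2 * μ + j = 2 * j + m + 2 + 2 * μ by ring,
      show (j : ℝ) + (m + 1) + 2 * μ + (j + 1) = 2 * j + m + 2 + 2 * μ by ring,
      show μ + 1 / 2 + ((j : ℝ) + 1) = (μ + 1 / 2 + j) + 1 by ring,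
      Gamma_add_one (by positivity), Gamma_add_one (by positivity), Gamma_add_one (by positivity)]
    field_simp
    ring

theorem sum_oneSubCoeff_recurrence {μ : ℝ} (hμ : 0 < μ) {n N : ℕ} (hN : n + 2 ≤ N) (u : ℝ) :
    ((n : ℝ) + 2) * ∑ k ∈ range (N + 1), oneSubCoeff μ (n + 2) k * u ^ k =
      2 * ((n : ℝ) + 1 + μ) * (1 - u) * ∑ k ∈ range (N + 1), oneSubCoeff μ (n + 1) k * u ^ k -
        ((n : ℝ) + 2 * μ) * ∑ k ∈ range (N + 1), oneSubCoeff μ n k * u ^ k := by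
  have hshift : u * ∑ k ∈ range (N + 1), oneSubCoeff μ (n + 1) k * u ^ k =
      ∑ j ∈ range N, oneSubCoeff μ (n + 1) j * u ^ (j + 1) := by
    rw [sum_range_succ, oneSubCoeff, if_neg (by omega), zero_mul, add_zero, mul_sum]
    exact sum_congr rfl fun j _ => by ring
  have hterm : ∀ j ∈ range N, ((n : ℝ) + 2) * (oneSubCoeff μ (n + 2) (j + 1) * u ^ (j + 1)) =
      2 * ((n : ℝ) + 1 + μ) * (oneSubCoeff μ (n + 1) (j + 1) * u ^ (j + 1)) -
        2 * ((n : ℝ) + 1 + μ) * (oneSubCoeff μ (n + 1) j * u ^ (j + 1)) -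
        ((n : ℝ) + 2 * μ) * (oneSubCoeff μ n (j + 1) * u ^ (j + 1)) := fun j _ => by
    linear_combination u ^ (j + 1) * oneSubCoeff_recurrence_succ hμ n j
  have hsum := sum_congr rfl hterm
  rw [sum_sub_distrib, sum_sub_distrib, ← mul_sum, ← mul_sum, ← mul_sum, ← mul_sum] at hsum
  rw [sum_range_succ' _ N] at hshift
  rw [sum_range_succ' _ N, sum_range_succ' _ N, sum_range_succ' _ N]
  linear_combination hsum + 2 * ((n : ℝ) + 1 + μ) * hshift + oneSubCoeff_recurrence_zero hμ n

theorem eq_sum_oneSubCoeff {μ : ℝ} (hμ : 0 < μ) (n : ℕ) {N : ℕ} (hN : n + 1 ≤ N) (t : ℝ) :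
    Gegenbauer μ n t = ∑ k ∈ range N, oneSubCoeff μ n k * (1 - t) ^ k := by
  rw [sum_oneSubCoeff_of_le μ hN]
  clear hN
  induction n using Nat.twoStepInduction with
  | zero =>
    rw [Gegenbauer_zero hμ, sum_range_one, oneSubCoeff, if_pos le_rfl]
    push_cast
    simp only [zero_add, add_zero, pow_zero, mul_one, factorial_zero, cast_one]
    field_simp
  | one =>
    rw [Gegenbauer_one hμ, sum_range_succ, sum_range_one]
    simp only [oneSubCoeff, if_pos zero_le_one, if_pos le_rfl]
    push_cast
    simp only [add_zero, pow_zero, pow_one, mul_one, one_mul]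
    rw [add_comm 1 (2 * μ), Gamma_add_one (by positivity : 2 * μ + 1 ≠ 0),
      Gamma_add_one (by positivity : 2 * μ ≠ 0), Gamma_add_one (by positivity : μ + 1 / 2 ≠ 0)]
    field_simp
    ring
  | more n ih₀ ih₁ =>
    have h := sum_oneSubCoeff_recurrence hμ (N := n + 2) le_rfl (1 - t)
    rw [sum_oneSubCoeff_of_le μ (n := n + 1) (by omega),
      sum_oneSubCoeff_of_le μ (n := n) (by omega), ← ih₀, ← ih₁, sub_sub_cancel,
      ← recurrence hμ n t] at h
    exact (mul_left_cancel₀ (by positivity) h).symm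

theorem oneSubCoeff_add_half {lam : ℝ} (hlam : 0 < lam) {n j : ℕ} (hj : j ≤ n) :
    oneSubCoeff (lam + 1 / 2) n j * (√π * Gamma (lam + j + 1) / Gamma (lam + j + 3 / 2)) /
        Gamma lam =
      √π / (2 * Gamma (lam + 1 / 2) * (n + lam + 1 / 2)) *
        ((n + 2 * lam) * oneSubCoeff lam n (j + 1) -
          (n + 1) * oneSubCoeff lam (n + 1) (j + 1)) := by
  obtain ⟨m, rfl⟩ := Nat.exists_eq_add_of_le hj
  rcases m with _ | m
  · simp only [Nat.add_zero, oneSubCoeff, if_pos le_rfl, if_neg (show ¬ j + 1 ≤ j by omega),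
      Nat.sub_self, factorial_zero, factorial_succ]
    push_cast
    rw [show (j : ℝ) + 2 * (lam + 1 / 2) + j = (j + 2 * lam + j + 1) by ring,
      show (j : ℝ) + 1 + 2 * lam + (j + 1) = (j + 2 * lam + j + 1) + 1 by ring,
      show lam + 1 / 2 + 1 / 2 = lam + 1 by ring, show 2 * (lam + 1 / 2) = 2 * lam + 1 by ring,
      show lam + 1 + (j : ℝ) = lam + j + 1 by ring,
      show lam + 1 / 2 + ((j : ℝ) + 1) = (lam + 1 / 2 + j) + 1 by ring,
      show lam + (j : ℝ) + 3 / 2 = (lam + 1 / 2 + j) + 1 by ring,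
      Gamma_add_one (by positivity : (j : ℝ) + 2 * lam + j + 1 ≠ 0),
      Gamma_add_one hlam.ne', Gamma_add_one (by positivity : 2 * lam ≠ 0),
      Gamma_add_one (by positivity : lam + 1 / 2 + j ≠ 0)]
    field_simp
    ring
  · simp only [oneSubCoeff, if_pos hj, if_pos (show j + 1 ≤ j + (m + 1) by omega),
      if_pos (show j + 1 ≤ j + (m + 1) + 1 by omega), show j + (m + 1) - j = m + 1 by omega,
      show j + (m + 1) - (j + 1) = m by omega, show j + (m + 1) + 1 - (j + 1) = m + 1 by omega,
      factorial_succ]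
    push_cast
    rw [show (j : ℝ) + (m + 1) + 2 * (lam + 1 / 2) + j = (j + (m + 1) + 2 * lam + j + 1) by ring,
      show (j : ℝ) + (m + 1) + 2 * lam + (j + 1) = (j + (m + 1) + 2 * lam + j + 1) by ring,
      show (j : ℝ) + (m + 1) + 1 + 2 * lam + (j + 1) = (j + (m + 1) + 2 * lam + j + 1) + 1 by
        ring,
      show lam + 1 / 2 + 1 / 2 = lam + 1 by ring, show 2 * (lam + 1 / 2) = 2 * lam + 1 by ring,
      show lam + 1 + (j : ℝ) = lam + j + 1 by ring,
      show lam + 1 / 2 + ((j : ℝ) + 1) = (lam + 1 / 2 + j) + 1 by ring,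
      show lam + (j : ℝ) + 3 / 2 = (lam + 1 / 2 + j) + 1 by ring,
      Gamma_add_one (by positivity : (j : ℝ) + (m + 1) + 2 * lam + j + 1 ≠ 0),
      Gamma_add_one hlam.ne', Gamma_add_one (by positivity : 2 * lam ≠ 0),
      Gamma_add_one (by positivity : lam + 1 / 2 + j ≠ 0)]
    field_simp
    ring

theorem integral_eq_sum_oneSubCoeff {lam : ℝ} (hlam : 0 < lam) (n : ℕ) {x : ℝ} (hx : x < 1) :
    ∫ t in x..1, (1 - t) ^ lam * (t - x) ^ (-(1 / 2) : ℝ) * Gegenbauer (lam + 1 / 2) n t =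
      ∑ j ∈ range (n + 1), oneSubCoeff (lam + 1 / 2) n j *
        (√π * Gamma (lam + j + 1) / Gamma (lam + j + 3 / 2)) * (1 - x) ^ (lam + j + 1 / 2) := by
  have hexp : Set.EqOn
      (fun t => (1 - t) ^ lam * (t - x) ^ (-(1 / 2) : ℝ) * Gegenbauer (lam + 1 / 2) n t)
      (fun t => ∑ j ∈ range (n + 1),
        oneSubCoeff (lam + 1 / 2) n j * ((1 - t) ^ (lam + j) * (t - x) ^ (-(1 / 2) : ℝ)))
      (Set.uIcc x 1) := by
    intro t ht
    rw [Set.uIcc_of_le hx.le] at ht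
    dsimp only
    rw [eq_sum_oneSubCoeff (by positivity) n le_rfl, mul_sum]
    refine sum_congr rfl fun j _ => ?_
    rw [rpow_add' (by linarith [ht.2]) (by positivity), rpow_natCast]
    ring
  have hint : ∀ j ∈ range (n + 1), IntervalIntegrable (fun t =>
      oneSubCoeff (lam + 1 / 2) n j * ((1 - t) ^ (lam + j) * (t - x) ^ (-(1 / 2) : ℝ)))
      volume x 1 := fun j _ =>
    (intervalIntegrable_one_sub_rpow_mul_sub_rpow (by positivity) (by norm_num) x).const_mul _
  rw [integral_congr hexp, integral_finsetSum hint]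
  refine sum_congr rfl fun j _ => ?_
  rw [intervalIntegral.integral_const_mul,
    integral_one_sub_rpow_mul_sub_rpow ((by positivity : (0 : ℝ) ≤ lam + j).trans_lt' (by norm_num))
      (by norm_num) hx,
    show -(1 / 2 : ℝ) + 1 = 1 / 2 by norm_num, Gamma_one_half_eq,
    show lam + j + -(1 / 2) + 1 = lam + j + 1 / 2 by ring,
    show lam + j + -(1 / 2) + 2 = lam + j + 3 / 2 by ring]
  ring

theorem add_two_mul_sub_succ_eq_sum {lam : ℝ} (hlam : 0 < lam) (n : ℕ) (x : ℝ) :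
    ((n : ℝ) + 2 * lam) * Gegenbauer lam n x - ((n : ℝ) + 1) * Gegenbauer lam (n + 1) x =
      ∑ j ∈ range (n + 1), ((n + 2 * lam) * oneSubCoeff lam n (j + 1) -
        (n + 1) * oneSubCoeff lam (n + 1) (j + 1)) * (1 - x) ^ (j + 1) := by
  rw [eq_sum_oneSubCoeff hlam n (N := n + 1 + 1) (by omega),
    eq_sum_oneSubCoeff hlam (n + 1) (N := n + 1 + 1) le_rfl, sum_range_succ' _ (n + 1),
    sum_range_succ' _ (n + 1)]
  have hsum :
      ((n : ℝ) + 2 * lam) * ∑ j ∈ range (n + 1), oneSubCoeff lam n (j + 1) * (1 - x) ^ (j + 1) -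
        ((n : ℝ) + 1) * ∑ j ∈ range (n + 1), oneSubCoeff lam (n + 1) (j + 1) * (1 - x) ^ (j + 1) =
      ∑ j ∈ range (n + 1), ((n + 2 * lam) * oneSubCoeff lam n (j + 1) -
        (n + 1) * oneSubCoeff lam (n + 1) (j + 1)) * (1 - x) ^ (j + 1) := by
    rw [mul_sum, mul_sum, ← sum_sub_distrib]
    exact sum_congr rfl fun j _ => by ring
  linear_combination hsum - oneSubCoeff_succ_zero hlam n

end Gegenbauer

open Gegenbauer in
/-- fractional integral of `C_n^{λ+1/2}` against `(1−t)^λ (t−x)^{−1/2}`. -/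
theorem stmt11 (lam : ℝ) (hlam : 0 < lam) (n : ℕ) (x : ℝ) (hx : x ∈ Set.Icc (-1 : ℝ) 1) :
    (1 / Real.Gamma lam) *
        ∫ t in x..(1 : ℝ), (1 - t) ^ lam * (t - x) ^ (-(1 / 2) : ℝ) * Gegenbauer (lam + 1 / 2) n t =
      (Real.sqrt Real.pi / (2 * Real.Gamma (lam + 1 / 2) * ((n : ℝ) + lam + 1 / 2))) *
        (1 - x) ^ (lam - 1 / 2) *
        (((n : ℝ) + 2 * lam) * Gegenbauer lam n x - ((n : ℝ) + 1) * Gegenbauer lam (n + 1) x) := by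
  rw [add_two_mul_sub_succ_eq_sum hlam n x]
  rcases hx.2.lt_or_eq with hx1 | rfl
  · rw [integral_eq_sum_oneSubCoeff hlam n hx1, mul_sum, mul_sum]
    refine sum_congr rfl fun j hj => ?_
    have hpow : (1 - x) ^ (lam + j + 1 / 2) = (1 - x) ^ (lam - 1 / 2) * (1 - x) ^ (j + 1) := by
      rw [← rpow_natCast, ← rpow_add (by linarith)]
      push_cast
      ring_nf
    rw [hpow]
    linear_combination (1 - x) ^ (lam - 1 / 2) * (1 - x) ^ (j + 1) *
      oneSubCoeff_add_half hlam (mem_range_succ_iff.mp hj)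
  · simp
end

section
/- For every λ ≥ 0, n ∈ ℕ₀ and x ∈ [−1,1], I^λ_− C_n^{λ+1/2}(x) = c_{n,λ} (1−x) · ₂F₁(−n, n+2λ+1; λ+3/2; (1−x)/2), where c_{n,λ} = (√π (2λ+1)_n / n!) · Γ(λ+1)/Γ(λ+3/2). -/
open Real MeasureTheory Finset intervalIntegral

/-!
Expanding `C_n^μ` in powers of `τ - 1` (its Taylor series at `1`, with
`C_n^μ⁽ʲ⁾ = 2ʲ (μ)_j C_{n-j}^{μ+j}` and `C_m^ν(1) = (2ν)_m / m!` from the three-term recurrence)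
gives `C_n^μ(τ) = (2μ)_n / n! · ₂F₁(−n, n+2μ; μ+1/2; (1−τ)/2)`. For `μ = λ + 1/2`, `I^λ_−` maps
`(1−τ)^j` by a Beta integral to `√π Γ(λ+j+1) / Γ(λ+j+3/2) · (1−x)^(j+1)`; termwise this turns the
lower parameter `λ+1` of the hypergeometric polynomial into `λ+3/2` and multiplies by `1−x`.
-/

lemma ascPochhammer_eval_add {S : Type*} [CommSemiring S] (x : S) (n m : ℕ) :
    (ascPochhammer S (n + m)).eval x =
      (ascPochhammer S n).eval x * (ascPochhammer S m).eval (x + n) := by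
  simp [← ascPochhammer_mul]

lemma ascPochhammer_eval_two_mul {K : Type*} [Field K] [CharZero K] (μ : K) (d : ℕ) :
    (ascPochhammer K (2 * d)).eval (2 * μ) =
      4 ^ d * (ascPochhammer K d).eval μ * (ascPochhammer K d).eval (μ + 1 / 2) := by
  induction d with
  | zero => simp
  | succ d ih =>
    rw [show 2 * (d + 1) = 2 * d + 1 + 1 by ring, ascPochhammer_succ_eval,
      ascPochhammer_succ_eval, ih, ascPochhammer_succ_eval, ascPochhammer_succ_eval]
    push_cast; ring

lemma ascPochhammer_eval_neg_natCast_mul_factorial {R : Type*} [CommRing R] {n j : ℕ}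
    (h : j ≤ n) :
    (ascPochhammer R j).eval (-(n : R)) * (n - j).factorial = (-1) ^ j * n.factorial := by
  rw [ascPochhammer_eval_neg_eq_descPochhammer, descPochhammer_eval_eq_descFactorial,
    mul_assoc, ← Nat.cast_mul, mul_comm (Nat.descFactorial _ _),
    Nat.factorial_mul_descFactorial h]

lemma Real.Gamma_add_nat_eq_mul_ascPochhammer {s : ℝ} (hs : 0 < s) (n : ℕ) :
    Gamma (s + n) = Gamma s * (ascPochhammer ℝ n).eval s := by
  induction n with
  | zero => simp
  | succ n ih =>
    rw [Nat.cast_succ, ← add_assoc, Real.Gamma_add_one (by positivity), ih,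
      ascPochhammer_succ_eval]
    ring

lemma gegenbauer_eq_sum_ascPochhammer {ν : ℝ} (hν : 0 < ν) (m : ℕ) (x : ℝ) :
    Gegenbauer ν m x = ∑ k ∈ range (m / 2 + 1),
      (-1) ^ k * (ascPochhammer ℝ (m - k)).eval ν / (k.factorial * (m - 2 * k).factorial) *
        (2 * x) ^ (m - 2 * k) := by
  refine sum_congr rfl fun k hk => ?_
  have hkm : k ≤ m := by rw [mem_range] at hk; omega
  rw [show (m : ℝ) - k + ν = ν + (m - k : ℕ) by push_cast [hkm]; ring,
    Real.Gamma_add_nat_eq_mul_ascPochhammer hν]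
  have := (Real.Gamma_pos_of_pos hν).ne'
  field_simp

theorem gegenbauer_add_two {ν : ℝ} (hν : 0 < ν) (m : ℕ) (x : ℝ) :
    (m + 2) * Gegenbauer ν (m + 2) x =
      2 * (ν + m + 1) * x * Gegenbauer ν (m + 1) x - (2 * ν + m) * Gegenbauer ν m x := by
  simp only [gegenbauer_eq_sum_ascPochhammer hν]
  set y := 2 * x
  set P : ℕ → ℝ := fun j => (ascPochhammer ℝ j).eval ν
  have hP : ∀ j, P (j + 1) = P j * (ν + j) := fun j => ascPochhammer_succ_eval j ν
  set t : ℕ → ℝ := fun k =>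
    (-1) ^ k * P (m + 1 - k) / (k.factorial * (m + 2 - 2 * k).factorial) * y ^ (m + 2 - 2 * k)
  have hrange : (m + 2) / 2 + 1 = m / 2 + 2 := by omega
  have hterm : ∀ k ∈ range (m / 2 + 2),
      (m + 2) * ((-1) ^ k * P (m + 2 - k) / (k.factorial * (m + 2 - 2 * k).factorial) *
        y ^ (m + 2 - 2 * k)) = (ν + m + 1) * ((m + 2 - 2 * k : ℕ) * t k) + (2 * ν + m) * (k * t k) := by
    intro k hk
    rw [mem_range] at hk
    have hk' : 2 * k ≤ m + 2 := by omega
    rw [show m + 2 - k = m + 1 - k + 1 by omega, hP]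
    simp only [t]
    push_cast [hk', show k ≤ m + 1 by omega]
    ring
  have hfirst : ∑ k ∈ range (m / 2 + 2), ((m + 2 - 2 * k : ℕ) * t k) =
      y * ∑ k ∈ range ((m + 1) / 2 + 1),
        (-1) ^ k * P (m + 1 - k) / (k.factorial * (m + 1 - 2 * k).factorial) *
          y ^ (m + 1 - 2 * k) := by
    rw [mul_sum, ← sum_subset (range_subset_range.2 (by omega : (m + 1) / 2 + 1 ≤ m / 2 + 2))]
    · refine sum_congr rfl fun k hk => ?_
      rw [mem_range] at hk
      simp only [t]
      rw [show m + 2 - 2 * k = m + 1 - 2 * k + 1 by omega, Nat.factorial_succ]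
      push_cast
      field_simp
      ring
    · intro k _ hk
      rw [mem_range] at hk
      rw [show m + 2 - 2 * k = 0 by omega]
      simp
  have hsecond : ∑ k ∈ range (m / 2 + 2), (k * t k) =
      -∑ k ∈ range (m / 2 + 1),
        (-1) ^ k * P (m - k) / (k.factorial * (m - 2 * k).factorial) * y ^ (m - 2 * k) := by
    rw [sum_range_succ', ← sum_neg_distrib]
    simp only [CharP.cast_eq_zero, zero_mul, add_zero]
    refine sum_congr rfl fun k hk => ?_
    simp only [t]
    rw [show m + 1 - (k + 1) = m - k by omega, show m + 2 - 2 * (k + 1) = m - 2 * k by omega,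
      Nat.factorial_succ]
    push_cast
    field_simp
    ring
  rw [hrange, mul_sum, sum_congr rfl hterm, sum_add_distrib, ← mul_sum, ← mul_sum, hfirst,
    hsecond]
  ring

theorem gegenbauer_one {ν : ℝ} (hν : 0 < ν) (m : ℕ) :
    Gegenbauer ν m 1 = (ascPochhammer ℝ m).eval (2 * ν) / m.factorial := by
  induction m using Nat.twoStepInduction with
  | zero => simp [gegenbauer_eq_sum_ascPochhammer hν]
  | one => simp [gegenbauer_eq_sum_ascPochhammer hν]; ring
  | more m ih₀ ih₁ =>
    have h := gegenbauer_add_two hν m 1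
    rw [ih₀, ih₁] at h
    have hm : (m : ℝ) + 2 ≠ 0 := by positivity
    rw [← mul_right_inj' hm, h, ascPochhammer_succ_eval, ascPochhammer_succ_eval,
      ascPochhammer_succ_eval, Nat.factorial_succ (m + 1), Nat.factorial_succ m]
    push_cast
    field_simp
    ring

theorem gegenbauer_eq_sum_sub_one_pow {μ : ℝ} (hμ : 0 < μ) (n : ℕ) (τ : ℝ) :
    Gegenbauer μ n τ = ∑ j ∈ range (n + 1),
      2 ^ j * (ascPochhammer ℝ j).eval μ / j.factorial * Gegenbauer (μ + j) (n - j) 1 *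
        (τ - 1) ^ j := by
  have hbinom : ∀ k ∈ range (n / 2 + 1), (2 * τ) ^ (n - 2 * k) =
      ∑ j ∈ range (n + 1), (2 * (τ - 1)) ^ j * 2 ^ (n - 2 * k - j) * (n - 2 * k).choose j := by
    intro k _
    rw [show 2 * τ = 2 * (τ - 1) + 2 by ring, add_pow]
    refine sum_subset (range_subset_range.2 (by omega)) fun j _ hj => ?_
    rw [mem_range, not_lt] at hj
    simp [Nat.choose_eq_zero_of_lt (show n - 2 * k < j by omega)]
  rw [gegenbauer_eq_sum_ascPochhammer hμ, sum_congr rfl fun k hk => by rw [hbinom k hk],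
    sum_congr rfl fun k _ => mul_sum _ _ _, sum_comm]
  refine sum_congr rfl fun j hj => ?_
  rw [mem_range] at hj
  rw [gegenbauer_eq_sum_ascPochhammer (by positivity), mul_sum, sum_mul,
    ← sum_subset (range_subset_range.2 (by omega : (n - j) / 2 + 1 ≤ n / 2 + 1))]
  · refine sum_congr rfl fun k hk => ?_
    rw [mem_range] at hk
    have hjk : j ≤ n - 2 * k := by omega
    rw [show n - k = j + (n - j - k) by omega, ascPochhammer_eval_add, Nat.cast_choose ℝ hjk,
      show n - j - 2 * k = n - 2 * k - j by omega]
    field_simp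
    rw [mul_pow]
    ring
  · intro k hk hk'
    rw [mem_range] at hk hk'
    simp [Nat.choose_eq_zero_of_lt (show n - 2 * k < j by omega)]

theorem gegenbauer_eq_hyp2F1 {μ : ℝ} (hμ : 0 < μ) (n : ℕ) (τ : ℝ) :
    Gegenbauer μ n τ = (ascPochhammer ℝ n).eval (2 * μ) / n.factorial *
      hyp2F1 n (n + 2 * μ) (μ + 1 / 2) ((1 - τ) / 2) := by
  rw [gegenbauer_eq_sum_sub_one_pow hμ, hyp2F1, mul_sum]
  refine sum_congr rfl fun j hj => ?_
  have hjn : j ≤ n := by rw [mem_range] at hj; omega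
  have := ascPochhammer_pos j μ hμ
  have := ascPochhammer_pos j (μ + 1 / 2) (by positivity)
  have hpoch : (ascPochhammer ℝ (n - j)).eval (2 * (μ + j)) =
      (ascPochhammer ℝ n).eval (2 * μ) * (ascPochhammer ℝ j).eval (n + 2 * μ) /
        (4 ^ j * (ascPochhammer ℝ j).eval μ * (ascPochhammer ℝ j).eval (μ + 1 / 2)) := by
    have h₁ := ascPochhammer_eval_add (2 * μ) (2 * j) (n - j)
    have h₂ := ascPochhammer_eval_add (2 * μ) n j
    rw [show 2 * j + (n - j) = n + j by omega, h₂, ascPochhammer_eval_two_mul] at h₁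
    rw [eq_div_iff (by positivity), add_comm (n : ℝ), h₁,
      show 2 * (μ + j) = 2 * μ + (2 * j : ℕ) by push_cast; ring]
    ring
  have hneg : (ascPochhammer ℝ j).eval (-(n : ℝ)) = (-1) ^ j * n.factorial / (n - j).factorial := by
    rw [eq_div_iff (by positivity), ascPochhammer_eval_neg_natCast_mul_factorial hjn]
  have := ascPochhammer_pos j (n + 2 * μ) (by positivity)
  rw [gegenbauer_one (by positivity), hpoch, hneg, show τ - 1 = -(1 - τ) by ring, neg_pow,
    div_pow, show (4 : ℝ) ^ j = 2 ^ j * 2 ^ j by rw [← mul_pow]; norm_num]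
  field_simp

theorem integral_rpow_mul_sub_rpow {p q a : ℝ} (hp : 0 < p) (hq : 0 < q) (ha : 0 < a) :
    ∫ s in (0 : ℝ)..a, s ^ (p - 1) * (a - s) ^ (q - 1) =
      a ^ (p + q - 1) * (Gamma p * Gamma q / Gamma (p + q)) := by
  have hbeta := Complex.Gamma_mul_Gamma_eq_betaIntegral (s := p) (t := q)
    (by simpa using hp) (by simpa using hq)
  rw [← Complex.ofReal_add, Complex.Gamma_ofReal, Complex.Gamma_ofReal,
    Complex.Gamma_ofReal] at hbeta
  have hB : Complex.betaIntegral p q = ↑(Gamma p * Gamma q / Gamma (p + q)) := by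
    have hΓ := (Gamma_pos_of_pos (add_pos hp hq)).ne'
    rw [Complex.ofReal_div, eq_div_iff (by exact_mod_cast hΓ), mul_comm, Complex.ofReal_mul, hbeta]
  have hscaled := Complex.betaIntegral_scaled p q ha
  rw [hB] at hscaled
  apply Complex.ofReal_injective
  rw [Complex.ofReal_mul, Complex.ofReal_cpow ha.le, show ((p + q - 1 : ℝ) : ℂ) = p + q - 1 by
    push_cast; ring, ← hscaled, ← intervalIntegral.integral_ofReal]
  refine intervalIntegral.integral_congr fun s hs => ?_
  rw [Set.uIcc_of_le ha.le] at hs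
  rw [Complex.ofReal_mul, Complex.ofReal_cpow hs.1, Complex.ofReal_cpow (by linarith [hs.2])]
  push_cast
  rfl

theorem integral_sub_rpow_mul_sub_rpow {p q x y : ℝ} (hp : 0 < p) (hq : 0 < q) (hxy : x < y) :
    ∫ τ in x..y, (τ - x) ^ (p - 1) * (y - τ) ^ (q - 1) =
      (y - x) ^ (p + q - 1) * (Gamma p * Gamma q / Gamma (p + q)) := by
  have h := intervalIntegral.integral_comp_sub_right
    (fun s => s ^ (p - 1) * ((y - x) - s) ^ (q - 1)) x (a := x) (b := y)
  simp only [sub_self, sub_sub_sub_cancel_right] at h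
  rw [h, integral_rpow_mul_sub_rpow hp hq (sub_pos.2 hxy)]

section FractionalIntegral

variable {lam x : ℝ}

lemma intervalIntegrable_Iminus_integrand (hlam : 0 ≤ lam) {f : ℝ → ℝ}
    (hf : ContinuousOn f (Set.uIcc x 1)) :
    IntervalIntegrable (fun τ => (τ - x) ^ (-(1 / 2) : ℝ) * (1 - τ) ^ lam * f τ) volume x 1 := by
  have hkernel : IntervalIntegrable (fun τ => (τ - x) ^ (-(1 / 2) : ℝ)) volume x 1 := by
    simpa using (intervalIntegral.intervalIntegrable_rpow' (a := 0) (b := 1 - x)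
      (r := -(1 / 2)) (by norm_num)).comp_sub_right x
  refine (hkernel.mul_continuousOn ?_).mul_continuousOn hf
  exact (continuous_const.sub continuous_id).continuousOn.rpow_const fun _ _ => Or.inr hlam

lemma Iminus_const_mul (c : ℝ) (f : ℝ → ℝ) :
    Iminus lam (fun τ => c * f τ) x = c * Iminus lam f x := by
  simp only [Iminus, mul_left_comm _ c, intervalIntegral.integral_const_mul]

lemma Iminus_finsetSum {ι : Type*} (s : Finset ι) (f : ι → ℝ → ℝ)
    (hf : ∀ i ∈ s, IntervalIntegrable
      (fun τ => (τ - x) ^ (-(1 / 2) : ℝ) * (1 - τ) ^ lam * f i τ) volume x 1) :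
    Iminus lam (fun τ => ∑ i ∈ s, f i τ) x = ∑ i ∈ s, Iminus lam (f i) x := by
  simp only [Iminus, mul_sum, intervalIntegral.integral_finsetSum hf]

theorem Iminus_one_sub_pow (hlam : 0 ≤ lam) (hx : x ≤ 1) (j : ℕ) :
    Iminus lam (fun τ => (1 - τ) ^ j) x =
      √π * (Gamma (lam + j + 1) / Gamma (lam + j + 3 / 2)) * (1 - x) ^ (j + 1) := by
  rcases hx.eq_or_lt with rfl | hx
  · simp [Iminus]
  have hpow : ∀ t : ℝ, 0 ≤ t → t ^ lam * t ^ j = t ^ (lam + j + 1 - 1) := by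
    intro t ht
    rw [add_sub_cancel_right]
    rcases j.eq_zero_or_pos with rfl | hj
    · simp
    · rw [rpow_add_natCast' ht (by positivity)]
  have hint : ∫ τ in x..1, (τ - x) ^ (-(1 / 2) : ℝ) * (1 - τ) ^ lam * (1 - τ) ^ j =
      ∫ τ in x..1, (τ - x) ^ ((1 / 2 : ℝ) - 1) * (1 - τ) ^ (lam + j + 1 - 1) := by
    refine intervalIntegral.integral_congr fun τ hτ => ?_
    rw [Set.uIcc_of_le hx.le] at hτ
    rw [mul_assoc, hpow _ (sub_nonneg.2 hτ.2)]
    norm_num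
  have h1x : 0 < 1 - x := sub_pos.2 hx
  rw [Iminus, hint, integral_sub_rpow_mul_sub_rpow (by norm_num) (by positivity) hx,
    Gamma_one_half_eq, ← mul_assoc, ← rpow_add h1x,
    show -lam + 1 / 2 + (1 / 2 + (lam + j + 1) - 1) = ((j + 1 : ℕ) : ℝ) by push_cast; ring,
    rpow_natCast, show 1 / 2 + (lam + j + 1) = lam + j + 3 / 2 by ring]
  ring

theorem Iminus_hyp2F1 (hlam : 0 ≤ lam) (hx : x ≤ 1) (n : ℕ) (b : ℝ) :
    Iminus lam (fun τ => hyp2F1 n b (lam + 1) ((1 - τ) / 2)) x =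
      √π * (Gamma (lam + 1) / Gamma (lam + 3 / 2)) * (1 - x) *
        hyp2F1 n b (lam + 3 / 2) ((1 - x) / 2) := by
  set a : ℕ → ℝ := fun k => (ascPochhammer ℝ k).eval (-(n : ℝ)) * (ascPochhammer ℝ k).eval b
  have hsum : (fun τ => hyp2F1 n b (lam + 1) ((1 - τ) / 2)) = fun τ => ∑ k ∈ range (n + 1),
      a k / ((ascPochhammer ℝ k).eval (lam + 1) * k.factorial * 2 ^ k) * (1 - τ) ^ k := by
    ext τ
    refine sum_congr rfl fun k _ => ?_
    rw [div_pow]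
    ring
  rw [hsum, Iminus_finsetSum, hyp2F1, mul_sum]
  · refine sum_congr rfl fun k _ => ?_
    rw [Iminus_const_mul, Iminus_one_sub_pow hlam hx,
      show lam + k + 1 = lam + 1 + k by ring, show lam + k + 3 / 2 = lam + 3 / 2 + k by ring,
      Gamma_add_nat_eq_mul_ascPochhammer (by positivity),
      Gamma_add_nat_eq_mul_ascPochhammer (by positivity), div_pow, pow_succ]
    have := ascPochhammer_pos k (lam + 1) (by positivity)
    have := ascPochhammer_pos k (lam + 3 / 2) (by positivity)
    have := Gamma_pos_of_pos (show 0 < lam + 3 / 2 by positivity)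
    field_simp
    ring
  · exact fun k _ => intervalIntegrable_Iminus_integrand hlam (by fun_prop)

end FractionalIntegral

/-- `I^λ_− C_n^{λ+1/2}` as a hypergeometric polynomial. -/
theorem stmt15 (lam : ℝ) (hlam : 0 ≤ lam) (n : ℕ) (x : ℝ) (hx : x ∈ Set.Icc (-1 : ℝ) 1) :
    Iminus lam (Gegenbauer (lam + 1 / 2) n) x =
      (Real.sqrt Real.pi * (ascPochhammer ℝ n).eval (2 * lam + 1) / (Nat.factorial n : ℝ) *
          (Real.Gamma (lam + 1) / Real.Gamma (lam + 3 / 2))) *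
        (1 - x) * hyp2F1 n ((n : ℝ) + 2 * lam + 1) (lam + 3 / 2) ((1 - x) / 2) := by
  have hC : Gegenbauer (lam + 1 / 2) n = fun τ => (ascPochhammer ℝ n).eval (2 * lam + 1) /
      n.factorial * hyp2F1 n ((n : ℝ) + 2 * lam + 1) (lam + 1) ((1 - τ) / 2) := by
    ext τ
    rw [gegenbauer_eq_hyp2F1 (by positivity), show 2 * (lam + 1 / 2) = 2 * lam + 1 by ring,
      show lam + 1 / 2 + 1 / 2 = lam + 1 by ring, ← add_assoc]
  rw [hC, Iminus_const_mul, Iminus_hyp2F1 hlam hx.2]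
  ring
end
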